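/- arXiv:1003.1874 — 6 statements merged into one kernel-verified Lean document; each statement's English description precedes it below -/
import Mathlib

section
/- For all real α and β, the sum of the linear entropies of the four single-qubit reduced density matrices of the Bell-type four-qubit state ψ(α,β) equals (1/2)·(2 − cos(4α) − cos(4β)). -/
open Real Matrix

noncomputable section

/-- The index type of a four-qubit state: (momentum of particle 1, momentum of particle 2,
spin of particle 1, spin of particle 2). -/
abbrev Q4 := Fin 2 × Fin 2 × Fin 2 × Fin 2

/-- The density matrix `|ψ⟩⟨ψ|` of a pure four-qubit state. -/
def dm (ψ : Q4 → ℂ) : Matrix Q4 Q4 ℂ := fun s t => ψ s * (starRingEnd ℂ) (ψ t)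

/-- The linear entropy `1 - Tr(σ²)`. -/
def SL {n : Type*} [Fintype n] (σ : Matrix n n ℂ) : ℂ := 1 - Matrix.trace (σ * σ)

/-- Reduced density matrix of qubit 1 (momentum of particle 1). -/
def red1 (ρ : Matrix Q4 Q4 ℂ) : Matrix (Fin 2) (Fin 2) ℂ := fun a a' =>
  ∑ b : Fin 2, ∑ c : Fin 2, ∑ d : Fin 2, ρ (a, b, c, d) (a', b, c, d)

/-- Reduced density matrix of qubit 2 (momentum of particle 2). -/
def red2 (ρ : Matrix Q4 Q4 ℂ) : Matrix (Fin 2) (Fin 2) ℂ := fun b b' =>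
  ∑ a : Fin 2, ∑ c : Fin 2, ∑ d : Fin 2, ρ (a, b, c, d) (a, b', c, d)

/-- Reduced density matrix of qubit 3 (spin of particle 1). -/
def red3 (ρ : Matrix Q4 Q4 ℂ) : Matrix (Fin 2) (Fin 2) ℂ := fun c c' =>
  ∑ a : Fin 2, ∑ b : Fin 2, ∑ d : Fin 2, ρ (a, b, c, d) (a, b, c', d)

/-- Reduced density matrix of qubit 4 (spin of particle 2). -/
def red4 (ρ : Matrix Q4 Q4 ℂ) : Matrix (Fin 2) (Fin 2) ℂ := fun d d' =>
  ∑ a : Fin 2, ∑ b : Fin 2, ∑ c : Fin 2, ρ (a, b, c, d) (a, b, c, d')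

/-- Momentum part: `cos α |p₊ p₋⟩ + sin α |p₋ p₊⟩`. -/
def momPart (α : ℝ) : Fin 2 × Fin 2 → ℂ := fun p =>
  if p = (0, 1) then ((Real.cos α : ℝ) : ℂ)
  else if p = (1, 0) then ((Real.sin α : ℝ) : ℂ) else 0

/-- Bell-type spin part: `cos β |↑↓⟩ + sin β |↓↑⟩`. -/
def spinBell (β : ℝ) : Fin 2 × Fin 2 → ℂ := fun s =>
  if s = (0, 1) then ((Real.cos β : ℝ) : ℂ)
  else if s = (1, 0) then ((Real.sin β : ℝ) : ℂ) else 0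

/-- The Bell-type four-qubit state ψ(α,β). -/
def bell (α β : ℝ) : Q4 → ℂ := fun q =>
  momPart α (q.1, q.2.1) * spinBell β (q.2.2.1, q.2.2.2)

/-!
ψ(α,β) is the product of a momentum state and a spin state of two qubits each, both of the form
cos θ |01⟩ + sin θ |10⟩. Tracing out a normalized factor leaves a one-qubit marginal of the other
factor, which is diagonal with entries cos² θ and sin² θ; hence each of the four linear entropies is
1 - cos⁴ θ - sin⁴ θ = (1 - cos 4θ) / 4.
-/

theorem SL_diagonal {n : Type*} [Fintype n] [DecidableEq n] (d : n → ℂ) :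
    SL (diagonal d) = 1 - ∑ i, d i ^ 2 := by
  simp only [SL, diagonal_mul_diagonal, trace_diagonal, sq]

theorem cos_pow_four_add_sin_pow_four (θ : ℝ) : cos θ ^ 4 + sin θ ^ 4 = (3 + cos (4 * θ)) / 4 := by
  have h4 : cos (4 * θ) = 2 * (2 * cos θ ^ 2 - 1) ^ 2 - 1 := by
    rw [show 4 * θ = 2 * (2 * θ) by ring, cos_two_mul, cos_two_mul]
  linear_combination (-1 / 4 : ℝ) * h4 + (sin θ ^ 2 + 1 - cos θ ^ 2) * cos_sq_add_sin_sq θ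

def prodState (φ χ : Fin 2 × Fin 2 → ℂ) : Q4 → ℂ := fun q => φ (q.1, q.2.1) * χ (q.2.2.1, q.2.2.2)

-- `momPart` and `spinBell` have the same body.
theorem bell_eq_prodState (α β : ℝ) : bell α β = prodState (spinBell α) (spinBell β) := rfl

def marginalFst (φ : Fin 2 × Fin 2 → ℂ) : Matrix (Fin 2) (Fin 2) ℂ :=
  fun a a' => ∑ b, φ (a, b) * starRingEnd ℂ (φ (a', b))

def marginalSnd (φ : Fin 2 × Fin 2 → ℂ) : Matrix (Fin 2) (Fin 2) ℂ :=
  fun b b' => ∑ a, φ (a, b) * starRingEnd ℂ (φ (a, b'))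

def IsNormalized (φ : Fin 2 × Fin 2 → ℂ) : Prop :=
  ∑ a, ∑ b, φ (a, b) * starRingEnd ℂ (φ (a, b)) = 1

section ProdState

variable {φ χ : Fin 2 × Fin 2 → ℂ}

theorem red1_dm_prodState (hχ : IsNormalized χ) : red1 (dm (prodState φ χ)) = marginalFst φ := by
  ext a a'
  rw [← mul_one (marginalFst φ a a'), ← hχ]
  simp only [red1, dm, prodState, marginalFst, map_mul, Fin.sum_univ_two]
  ring

theorem red2_dm_prodState (hχ : IsNormalized χ) : red2 (dm (prodState φ χ)) = marginalSnd φ := by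
  ext b b'
  rw [← mul_one (marginalSnd φ b b'), ← hχ]
  simp only [red2, dm, prodState, marginalSnd, map_mul, Fin.sum_univ_two]
  ring

theorem red3_dm_prodState (hφ : IsNormalized φ) : red3 (dm (prodState φ χ)) = marginalFst χ := by
  ext c c'
  rw [← one_mul (marginalFst χ c c'), ← hφ]
  simp only [red3, dm, prodState, marginalFst, map_mul, Fin.sum_univ_two]
  ring

theorem red4_dm_prodState (hφ : IsNormalized φ) : red4 (dm (prodState φ χ)) = marginalSnd χ := by
  ext d d'
  rw [← one_mul (marginalSnd χ d d'), ← hφ]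
  simp only [red4, dm, prodState, marginalSnd, map_mul, Fin.sum_univ_two]
  ring

end ProdState

theorem isNormalized_spinBell (θ : ℝ) : IsNormalized (spinBell θ) := by
  simp only [IsNormalized, spinBell, Fin.sum_univ_two]
  norm_num [Prod.ext_iff, Complex.conj_ofReal, ← sq, -Complex.ofReal_cos, -Complex.ofReal_sin]
  exact_mod_cast cos_sq_add_sin_sq θ

theorem marginalFst_spinBell (θ : ℝ) :
    marginalFst (spinBell θ) = diagonal ![(cos θ : ℂ) ^ 2, (sin θ : ℂ) ^ 2] := by
  ext a a'
  fin_cases a <;> fin_cases a' <;>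
    simp [marginalFst, spinBell, Complex.conj_ofReal, sq, -Complex.ofReal_cos, -Complex.ofReal_sin]

theorem marginalSnd_spinBell (θ : ℝ) :
    marginalSnd (spinBell θ) = diagonal ![(sin θ : ℂ) ^ 2, (cos θ : ℂ) ^ 2] := by
  ext b b'
  fin_cases b <;> fin_cases b' <;>
    simp [marginalSnd, spinBell, Complex.conj_ofReal, sq, -Complex.ofReal_cos, -Complex.ofReal_sin]

theorem SL_marginalFst_spinBell (θ : ℝ) :
    SL (marginalFst (spinBell θ)) = ((1 - cos (4 * θ)) / 4 : ℝ) := by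
  rw [marginalFst_spinBell, SL_diagonal, Fin.sum_univ_two]
  simp only [Matrix.cons_val_zero, Matrix.cons_val_one, ← pow_mul]
  exact_mod_cast (by linear_combination -cos_pow_four_add_sin_pow_four θ :
    1 - (cos θ ^ 4 + sin θ ^ 4) = (1 - cos (4 * θ)) / 4)

theorem SL_marginalSnd_spinBell (θ : ℝ) :
    SL (marginalSnd (spinBell θ)) = ((1 - cos (4 * θ)) / 4 : ℝ) := by
  rw [marginalSnd_spinBell, SL_diagonal, Fin.sum_univ_two]
  simp only [Matrix.cons_val_zero, Matrix.cons_val_one, ← pow_mul]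
  exact_mod_cast (by linear_combination -cos_pow_four_add_sin_pow_four θ :
    1 - (sin θ ^ 4 + cos θ ^ 4) = (1 - cos (4 * θ)) / 4)

/-- the sum of the linear entropies of the four single-qubit reduced density
matrices of the Bell-type state ψ(α,β) equals `(1/2)(2 − cos 4α − cos 4β)`. -/
theorem stmt0 (α β : ℝ) :
    SL (red1 (dm (bell α β))) + SL (red2 (dm (bell α β))) +
      SL (red3 (dm (bell α β))) + SL (red4 (dm (bell α β))) =
      ((1 / 2 * (2 - Real.cos (4 * α) - Real.cos (4 * β)) : ℝ) : ℂ) := by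
  rw [bell_eq_prodState, red1_dm_prodState (isNormalized_spinBell β),
    red2_dm_prodState (isNormalized_spinBell β), red3_dm_prodState (isNormalized_spinBell α),
    red4_dm_prodState (isNormalized_spinBell α), SL_marginalFst_spinBell, SL_marginalSnd_spinBell,
    SL_marginalFst_spinBell, SL_marginalSnd_spinBell]
  push_cast
  ring
end
end

section
/- For all real α, β, δ, the difference between the sum of the linear entropies of the four single-qubit reduced density matrices of the Wigner-rotated state ψ^Λ(α,β,δ) and the same quantity for the Bell-type state ψ(α,β) equals sin²(δ)·sin²(2α)·cos²(2β). -/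
set_option maxHeartbeats 2000000
set_option maxRecDepth 10000


open Real Matrix

noncomputable section

/-- The Wigner-rotation matrix U₊. -/
def Uplus (δ : ℝ) : Matrix (Fin 2) (Fin 2) ℂ :=
  !![((Real.cos (δ / 2) : ℝ) : ℂ), ((Real.sin (δ / 2) : ℝ) : ℂ);
     -((Real.sin (δ / 2) : ℝ) : ℂ), ((Real.cos (δ / 2) : ℝ) : ℂ)]

/-- The Wigner-rotation matrix U₋. -/
def Uminus (δ : ℝ) : Matrix (Fin 2) (Fin 2) ℂ :=
  !![((Real.cos (δ / 2) : ℝ) : ℂ), -((Real.sin (δ / 2) : ℝ) : ℂ);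
     ((Real.sin (δ / 2) : ℝ) : ℂ), ((Real.cos (δ / 2) : ℝ) : ℂ)]

/-- The Wigner rotation acting on the spin of a particle with momentum index `0` (i.e. `p₊`)
is `U₊`, and with momentum index `1` (i.e. `p₋`) is `U₋`. -/
def Usel (δ : ℝ) : Fin 2 → Matrix (Fin 2) (Fin 2) ℂ := fun i =>
  if i = 0 then Uplus δ else Uminus δ

/-- The Wigner-rotated state: on the momentum component `(0,1)` the matrix `U₊ ⊗ U₋` is
applied to the spin positions, and on `(1,0)` the matrix `U₋ ⊗ U₊`. -/
def rotated (δ : ℝ) (ψ : Q4 → ℂ) : Q4 → ℂ := fun q =>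
  ∑ c' : Fin 2, ∑ d' : Fin 2,
    Usel δ q.1 q.2.2.1 c' * Usel δ q.2.1 q.2.2.2 d' * ψ (q.1, q.2.1, c', d')


lemma rot_eq (α β δ : ℝ) : rotated δ (bell α β) = fun q =>
    momPart α (q.1, q.2.1) *
      (if q.2.2 = ((0 : Fin 2), (1 : Fin 2)) then
        (Real.cos (δ/2) : ℂ)^2 * (Real.cos β : ℂ) + (Real.sin (δ/2) : ℂ)^2 * (Real.sin β : ℂ)
      else if q.2.2 = ((1 : Fin 2), (0 : Fin 2)) then
        (Real.sin (δ/2) : ℂ)^2 * (Real.cos β : ℂ) + (Real.cos (δ/2) : ℂ)^2 * (Real.sin β : ℂ)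
      else if q.1 = 0 then
        (Real.sin (δ/2) : ℂ) * (Real.cos (δ/2) : ℂ) * ((Real.sin β : ℂ) - (Real.cos β : ℂ))
      else
        (Real.sin (δ/2) : ℂ) * (Real.cos (δ/2) : ℂ) * ((Real.cos β : ℂ) - (Real.sin β : ℂ))) := by
  funext q
  obtain ⟨a, b, c, d⟩ := q
  fin_cases a <;> fin_cases b <;> fin_cases c <;> fin_cases d <;>
    simp [rotated, bell, momPart, spinBell, Usel, Uplus, Uminus, Fin.sum_univ_two,
      Prod.ext_iff] <;> ring

/-- the difference of the sums of single-qubit linear entropies between the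
Wigner-rotated state ψ^Λ(α,β,δ) and the Bell-type state ψ(α,β) equals
`sin²δ · sin²(2α) · cos²(2β)`. -/
theorem stmt1 (α β δ : ℝ) :
    (SL (red1 (dm (rotated δ (bell α β)))) + SL (red2 (dm (rotated δ (bell α β)))) +
        SL (red3 (dm (rotated δ (bell α β)))) + SL (red4 (dm (rotated δ (bell α β))))) -
      (SL (red1 (dm (bell α β))) + SL (red2 (dm (bell α β))) +
        SL (red3 (dm (bell α β))) + SL (red4 (dm (bell α β)))) =
      ((Real.sin δ ^ 2 * Real.sin (2 * α) ^ 2 * Real.cos (2 * β) ^ 2 : ℝ) : ℂ) := by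
  have ha : Complex.sin (α:ℂ)^2 + Complex.cos (α:ℂ)^2 = 1 := Complex.sin_sq_add_cos_sq _
  have hb : Complex.sin (β:ℂ)^2 + Complex.cos (β:ℂ)^2 = 1 := Complex.sin_sq_add_cos_sq _
  have hd : Complex.sin ((δ:ℂ)/2)^2 + Complex.cos ((δ:ℂ)/2)^2 = 1 := Complex.sin_sq_add_cos_sq _
  have hsd : Real.sin δ = 2 * Real.sin (δ/2) * Real.cos (δ/2) := by
    rw [← Real.sin_two_mul]; ring_nf
  have hsa : Real.sin (2*α) = 2 * Real.sin α * Real.cos α := Real.sin_two_mul α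
  have hcb : Real.cos (2*β) = Real.cos β^2 - Real.sin β^2 := by
    rw [Real.cos_two_mul]
    nlinarith [Real.sin_sq_add_cos_sq β]
  rw [rot_eq, hsd, hsa, hcb]
  simp only [SL, red1, red2, red3, red4, dm, bell, momPart, spinBell,
    Matrix.trace_fin_two, Matrix.mul_apply, Fin.sum_univ_two, Fin.isValue,
    Prod.mk.injEq, _root_.map_mul, map_add, map_sub, map_pow, apply_ite (starRingEnd ℂ), map_zero, _root_.map_one,
    Complex.conj_ofReal]
  norm_num
  try simp only [Complex.ofReal_mul, Complex.ofReal_pow, Complex.ofReal_sub, Complex.ofReal_add,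
    Complex.ofReal_ofNat]
  linear_combination ((-4:ℂ)*Complex.cos (α:ℂ)^4*Complex.cos (β:ℂ)^4 + (-4:ℂ)*Complex.cos (α:ℂ)^4*Complex.cos (β:ℂ)^4*Complex.cos ((δ:ℂ)/2)^2 + (-4:ℂ)*Complex.cos (α:ℂ)^4*Complex.cos (β:ℂ)^4*Complex.cos ((δ:ℂ)/2)^4 + (-4:ℂ)*Complex.cos (α:ℂ)^4*Complex.cos (β:ℂ)^4*Complex.cos ((δ:ℂ)/2)^6 + (-4:ℂ)*Complex.cos (α:ℂ)^4*Complex.cos (β:ℂ)^4*Complex.sin ((δ:ℂ)/2)^2 + (-8:ℂ)*Complex.cos (α:ℂ)^4*Complex.cos (β:ℂ)^4*Complex.sin ((δ:ℂ)/2)^2*Complex.cos ((δ:ℂ)/2)^2 + (-12:ℂ)*Complex.cos (α:ℂ)^4*Complex.cos (β:ℂ)^4*Complex.sin ((δ:ℂ)/2)^2*Complex.cos ((δ:ℂ)/2)^4 + (-4:ℂ)*Complex.cos (α:ℂ)^4*Complex.cos (β:ℂ)^4*Complex.sin ((δ:ℂ)/2)^4 + (-12:ℂ)*Complex.cos (α:ℂ)^4*Complex.cos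 (β:ℂ)^4*Complex.sin ((δ:ℂ)/2)^4*Complex.cos ((δ:ℂ)/2)^2 + (-4:ℂ)*Complex.cos (α:ℂ)^4*Complex.cos (β:ℂ)^4*Complex.sin ((δ:ℂ)/2)^6 + (-4:ℂ)*Complex.cos (α:ℂ)^4*Complex.sin (β:ℂ)^2*Complex.cos (β:ℂ)^2 + (-4:ℂ)*Complex.cos (α:ℂ)^4*Complex.sin (β:ℂ)^2*Complex.cos (β:ℂ)^2*Complex.cos ((δ:ℂ)/2)^2 + (-4:ℂ)*Complex.cos (α:ℂ)^4*Complex.sin (β:ℂ)^2*Complex.cos (β:ℂ)^2*Complex.cos ((δ:ℂ)/2)^4 + (-4:ℂ)*Complex.cos (α:ℂ)^4*Complex.sin (β:ℂ)^2*Complex.cos (β:ℂ)^2*Complex.cos ((δ:ℂ)/2)^6 + (-4:ℂ)*Complex.cos (α:ℂ)^4*Complex.sin (β:ℂ)^2*Complex.cos (β:ℂ)^2*Complex.sin ((δ:ℂ)/2)^2 + (-8:ℂ)*Complex.cos (α:ℂ)^4*Complex.sin (β:ℂ)^2*Complex.cos (β:ℂ)^2*Complex.sin ((δ:ℂ)/2)^2*Complex.cos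 ((δ:ℂ)/2)^2 + (-12:ℂ)*Complex.cos (α:ℂ)^4*Complex.sin (β:ℂ)^2*Complex.cos (β:ℂ)^2*Complex.sin ((δ:ℂ)/2)^2*Complex.cos ((δ:ℂ)/2)^4 + (-4:ℂ)*Complex.cos (α:ℂ)^4*Complex.sin (β:ℂ)^2*Complex.cos (β:ℂ)^2*Complex.sin ((δ:ℂ)/2)^4 + (-12:ℂ)*Complex.cos (α:ℂ)^4*Complex.sin (β:ℂ)^2*Complex.cos (β:ℂ)^2*Complex.sin ((δ:ℂ)/2)^4*Complex.cos ((δ:ℂ)/2)^2 + (-4:ℂ)*Complex.cos (α:ℂ)^4*Complex.sin (β:ℂ)^2*Complex.cos (β:ℂ)^2*Complex.sin ((δ:ℂ)/2)^6 + (-4:ℂ)*Complex.cos (α:ℂ)^4*Complex.sin (β:ℂ)^4 + (-4:ℂ)*Complex.cos (α:ℂ)^4*Complex.sin (β:ℂ)^4*Complex.cos ((δ:ℂ)/2)^2 + (-4:ℂ)*Complex.cos (α:ℂ)^4*Complex.sin (β:ℂ)^4*Complex.cos ((δ:ℂ)/2)^4 + (-4:ℂ)*Complex.cos (α:ℂ)^4*Complex.sin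 (β:ℂ)^4*Complex.cos ((δ:ℂ)/2)^6 + (-4:ℂ)*Complex.cos (α:ℂ)^4*Complex.sin (β:ℂ)^4*Complex.sin ((δ:ℂ)/2)^2 + (-8:ℂ)*Complex.cos (α:ℂ)^4*Complex.sin (β:ℂ)^4*Complex.sin ((δ:ℂ)/2)^2*Complex.cos ((δ:ℂ)/2)^2 + (-12:ℂ)*Complex.cos (α:ℂ)^4*Complex.sin (β:ℂ)^4*Complex.sin ((δ:ℂ)/2)^2*Complex.cos ((δ:ℂ)/2)^4 + (-4:ℂ)*Complex.cos (α:ℂ)^4*Complex.sin (β:ℂ)^4*Complex.sin ((δ:ℂ)/2)^4 + (-12:ℂ)*Complex.cos (α:ℂ)^4*Complex.sin (β:ℂ)^4*Complex.sin ((δ:ℂ)/2)^4*Complex.cos ((δ:ℂ)/2)^2 + (-4:ℂ)*Complex.cos (α:ℂ)^4*Complex.sin (β:ℂ)^4*Complex.sin ((δ:ℂ)/2)^6 + (-4:ℂ)*Complex.sin (α:ℂ)^2*Complex.cos (α:ℂ)^2*Complex.cos (β:ℂ)^4 + (-4:ℂ)*Complex.sin (α:ℂ)^2*Complex.cos (α:ℂ)^2*Complex.cos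 (β:ℂ)^4*Complex.cos ((δ:ℂ)/2)^2 + (-4:ℂ)*Complex.sin (α:ℂ)^2*Complex.cos (α:ℂ)^2*Complex.cos (β:ℂ)^4*Complex.cos ((δ:ℂ)/2)^4 + (-4:ℂ)*Complex.sin (α:ℂ)^2*Complex.cos (α:ℂ)^2*Complex.cos (β:ℂ)^4*Complex.cos ((δ:ℂ)/2)^6 + (-4:ℂ)*Complex.sin (α:ℂ)^2*Complex.cos (α:ℂ)^2*Complex.cos (β:ℂ)^4*Complex.sin ((δ:ℂ)/2)^2 + (8:ℂ)*Complex.sin (α:ℂ)^2*Complex.cos (α:ℂ)^2*Complex.cos (β:ℂ)^4*Complex.sin ((δ:ℂ)/2)^2*Complex.cos ((δ:ℂ)/2)^2 + (4:ℂ)*Complex.sin (α:ℂ)^2*Complex.cos (α:ℂ)^2*Complex.cos (β:ℂ)^4*Complex.sin ((δ:ℂ)/2)^2*Complex.cos ((δ:ℂ)/2)^4 + (-4:ℂ)*Complex.sin (α:ℂ)^2*Complex.cos (α:ℂ)^2*Complex.cos (β:ℂ)^4*Complex.sin ((δ:ℂ)/2)^4 + (4:ℂ)*Complex.sin (α:ℂ)^2*Complex.cos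 (α:ℂ)^2*Complex.cos (β:ℂ)^4*Complex.sin ((δ:ℂ)/2)^4*Complex.cos ((δ:ℂ)/2)^2 + (-4:ℂ)*Complex.sin (α:ℂ)^2*Complex.cos (α:ℂ)^2*Complex.cos (β:ℂ)^4*Complex.sin ((δ:ℂ)/2)^6 + (-32:ℂ)*Complex.sin (α:ℂ)^2*Complex.cos (α:ℂ)^2*Complex.sin (β:ℂ)^2*Complex.cos (β:ℂ)^2*Complex.sin ((δ:ℂ)/2)^2*Complex.cos ((δ:ℂ)/2)^2 + (-32:ℂ)*Complex.sin (α:ℂ)^2*Complex.cos (α:ℂ)^2*Complex.sin (β:ℂ)^2*Complex.cos (β:ℂ)^2*Complex.sin ((δ:ℂ)/2)^2*Complex.cos ((δ:ℂ)/2)^4 + (-32:ℂ)*Complex.sin (α:ℂ)^2*Complex.cos (α:ℂ)^2*Complex.sin (β:ℂ)^2*Complex.cos (β:ℂ)^2*Complex.sin ((δ:ℂ)/2)^4*Complex.cos ((δ:ℂ)/2)^2 + (-4:ℂ)*Complex.sin (α:ℂ)^2*Complex.cos (α:ℂ)^2*Complex.sin (β:ℂ)^4 + (-4:ℂ)*Complex.sin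 (α:ℂ)^2*Complex.cos (α:ℂ)^2*Complex.sin (β:ℂ)^4*Complex.cos ((δ:ℂ)/2)^2 + (-4:ℂ)*Complex.sin (α:ℂ)^2*Complex.cos (α:ℂ)^2*Complex.sin (β:ℂ)^4*Complex.cos ((δ:ℂ)/2)^4 + (-4:ℂ)*Complex.sin (α:ℂ)^2*Complex.cos (α:ℂ)^2*Complex.sin (β:ℂ)^4*Complex.cos ((δ:ℂ)/2)^6 + (-4:ℂ)*Complex.sin (α:ℂ)^2*Complex.cos (α:ℂ)^2*Complex.sin (β:ℂ)^4*Complex.sin ((δ:ℂ)/2)^2 + (8:ℂ)*Complex.sin (α:ℂ)^2*Complex.cos (α:ℂ)^2*Complex.sin (β:ℂ)^4*Complex.sin ((δ:ℂ)/2)^2*Complex.cos ((δ:ℂ)/2)^2 + (4:ℂ)*Complex.sin (α:ℂ)^2*Complex.cos (α:ℂ)^2*Complex.sin (β:ℂ)^4*Complex.sin ((δ:ℂ)/2)^2*Complex.cos ((δ:ℂ)/2)^4 + (-4:ℂ)*Complex.sin (α:ℂ)^2*Complex.cos (α:ℂ)^2*Complex.sin (β:ℂ)^4*Complex.sin ((δ:ℂ)/2)^4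 + (4:ℂ)*Complex.sin (α:ℂ)^2*Complex.cos (α:ℂ)^2*Complex.sin (β:ℂ)^4*Complex.sin ((δ:ℂ)/2)^4*Complex.cos ((δ:ℂ)/2)^2 + (-4:ℂ)*Complex.sin (α:ℂ)^2*Complex.cos (α:ℂ)^2*Complex.sin (β:ℂ)^4*Complex.sin ((δ:ℂ)/2)^6 + (-4:ℂ)*Complex.sin (α:ℂ)^4*Complex.cos (β:ℂ)^4 + (-4:ℂ)*Complex.sin (α:ℂ)^4*Complex.cos (β:ℂ)^4*Complex.cos ((δ:ℂ)/2)^2 + (-4:ℂ)*Complex.sin (α:ℂ)^4*Complex.cos (β:ℂ)^4*Complex.cos ((δ:ℂ)/2)^4 + (-4:ℂ)*Complex.sin (α:ℂ)^4*Complex.cos (β:ℂ)^4*Complex.cos ((δ:ℂ)/2)^6 + (-4:ℂ)*Complex.sin (α:ℂ)^4*Complex.cos (β:ℂ)^4*Complex.sin ((δ:ℂ)/2)^2 + (-8:ℂ)*Complex.sin (α:ℂ)^4*Complex.cos (β:ℂ)^4*Complex.sin ((δ:ℂ)/2)^2*Complex.cos ((δ:ℂ)/2)^2 + (-12:ℂ)*Complex.sin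 (α:ℂ)^4*Complex.cos (β:ℂ)^4*Complex.sin ((δ:ℂ)/2)^2*Complex.cos ((δ:ℂ)/2)^4 + (-4:ℂ)*Complex.sin (α:ℂ)^4*Complex.cos (β:ℂ)^4*Complex.sin ((δ:ℂ)/2)^4 + (-12:ℂ)*Complex.sin (α:ℂ)^4*Complex.cos (β:ℂ)^4*Complex.sin ((δ:ℂ)/2)^4*Complex.cos ((δ:ℂ)/2)^2 + (-4:ℂ)*Complex.sin (α:ℂ)^4*Complex.cos (β:ℂ)^4*Complex.sin ((δ:ℂ)/2)^6 + (-4:ℂ)*Complex.sin (α:ℂ)^4*Complex.sin (β:ℂ)^2*Complex.cos (β:ℂ)^2 + (-4:ℂ)*Complex.sin (α:ℂ)^4*Complex.sin (β:ℂ)^2*Complex.cos (β:ℂ)^2*Complex.cos ((δ:ℂ)/2)^2 + (-4:ℂ)*Complex.sin (α:ℂ)^4*Complex.sin (β:ℂ)^2*Complex.cos (β:ℂ)^2*Complex.cos ((δ:ℂ)/2)^4 + (-4:ℂ)*Complex.sin (α:ℂ)^4*Complex.sin (β:ℂ)^2*Complex.cos (β:ℂ)^2*Complex.cos ((δ:ℂ)/2)^6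 + (-4:ℂ)*Complex.sin (α:ℂ)^4*Complex.sin (β:ℂ)^2*Complex.cos (β:ℂ)^2*Complex.sin ((δ:ℂ)/2)^2 + (-8:ℂ)*Complex.sin (α:ℂ)^4*Complex.sin (β:ℂ)^2*Complex.cos (β:ℂ)^2*Complex.sin ((δ:ℂ)/2)^2*Complex.cos ((δ:ℂ)/2)^2 + (-12:ℂ)*Complex.sin (α:ℂ)^4*Complex.sin (β:ℂ)^2*Complex.cos (β:ℂ)^2*Complex.sin ((δ:ℂ)/2)^2*Complex.cos ((δ:ℂ)/2)^4 + (-4:ℂ)*Complex.sin (α:ℂ)^4*Complex.sin (β:ℂ)^2*Complex.cos (β:ℂ)^2*Complex.sin ((δ:ℂ)/2)^4 + (-12:ℂ)*Complex.sin (α:ℂ)^4*Complex.sin (β:ℂ)^2*Complex.cos (β:ℂ)^2*Complex.sin ((δ:ℂ)/2)^4*Complex.cos ((δ:ℂ)/2)^2 + (-4:ℂ)*Complex.sin (α:ℂ)^4*Complex.sin (β:ℂ)^2*Complex.cos (β:ℂ)^2*Complex.sin ((δ:ℂ)/2)^6 + (-4:ℂ)*Complex.sin (α:ℂ)^4*Complex.sin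 (β:ℂ)^4 + (-4:ℂ)*Complex.sin (α:ℂ)^4*Complex.sin (β:ℂ)^4*Complex.cos ((δ:ℂ)/2)^2 + (-4:ℂ)*Complex.sin (α:ℂ)^4*Complex.sin (β:ℂ)^4*Complex.cos ((δ:ℂ)/2)^4 + (-4:ℂ)*Complex.sin (α:ℂ)^4*Complex.sin (β:ℂ)^4*Complex.cos ((δ:ℂ)/2)^6 + (-4:ℂ)*Complex.sin (α:ℂ)^4*Complex.sin (β:ℂ)^4*Complex.sin ((δ:ℂ)/2)^2 + (-8:ℂ)*Complex.sin (α:ℂ)^4*Complex.sin (β:ℂ)^4*Complex.sin ((δ:ℂ)/2)^2*Complex.cos ((δ:ℂ)/2)^2 + (-12:ℂ)*Complex.sin (α:ℂ)^4*Complex.sin (β:ℂ)^4*Complex.sin ((δ:ℂ)/2)^2*Complex.cos ((δ:ℂ)/2)^4 + (-4:ℂ)*Complex.sin (α:ℂ)^4*Complex.sin (β:ℂ)^4*Complex.sin ((δ:ℂ)/2)^4 + (-12:ℂ)*Complex.sin (α:ℂ)^4*Complex.sin (β:ℂ)^4*Complex.sin ((δ:ℂ)/2)^4*Complex.cos ((δ:ℂ)/2)^2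 + (-4:ℂ)*Complex.sin (α:ℂ)^4*Complex.sin (β:ℂ)^4*Complex.sin ((δ:ℂ)/2)^6) * hd + (0:ℂ) * hb + (0:ℂ) * ha
end
end

section
/- For all real α, β, δ, the Wigner-rotated state ψ^Λ(α,β,δ) satisfies S_L(ρ^Λ_mom) + S_L(ρ^Λ_spin) = (1/2)·sin²(δ)·sin²(2α)·(1 − sin(2β))·(3 + cos(2δ) + 2 sin²(δ) sin(2β)), where ρ^Λ_mom is the reduced density matrix of the two momentum qubits and ρ^Λ_spin that of the two spin qubits. -/
open Real Matrix

noncomputable section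

/-- Reduced density matrix of the two momentum qubits. -/
def redMom (ρ : Matrix Q4 Q4 ℂ) : Matrix (Fin 2 × Fin 2) (Fin 2 × Fin 2) ℂ := fun p q =>
  ∑ c : Fin 2, ∑ d : Fin 2, ρ (p.1, p.2, c, d) (q.1, q.2, c, d)

/-- Reduced density matrix of the two spin qubits. -/
def redSpin (ρ : Matrix Q4 Q4 ℂ) : Matrix (Fin 2 × Fin 2) (Fin 2 × Fin 2) ℂ := fun s t =>
  ∑ a : Fin 2, ∑ b : Fin 2, ρ (a, b, s.1, s.2) (a, b, t.1, t.2)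

set_option maxHeartbeats 4000000 in
/-- for the Wigner-rotated Bell-type state,
`S_L(ρ^Λ_mom) + S_L(ρ^Λ_spin) = (1/2)·sin²δ·sin²(2α)·(1 − sin 2β)·(3 + cos 2δ + 2 sin²δ sin 2β)`. -/
theorem stmt2 (α β δ : ℝ) :
    SL (redMom (dm (rotated δ (bell α β)))) + SL (redSpin (dm (rotated δ (bell α β)))) =
      ((1 / 2 * Real.sin δ ^ 2 * Real.sin (2 * α) ^ 2 * (1 - Real.sin (2 * β)) *
          (3 + Real.cos (2 * δ) + 2 * Real.sin δ ^ 2 * Real.sin (2 * β)) : ℝ) : ℂ) := by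
  have ha : Complex.sin (α:ℂ) ^ 2 + Complex.cos (α:ℂ) ^ 2 = 1 := Complex.sin_sq_add_cos_sq (α:ℂ)
  have hb : Complex.sin (β:ℂ) ^ 2 + Complex.cos (β:ℂ) ^ 2 = 1 := Complex.sin_sq_add_cos_sq (β:ℂ)
  have hd : Complex.sin ((δ:ℂ)/2) ^ 2 + Complex.cos ((δ:ℂ)/2) ^ 2 = 1 :=
    Complex.sin_sq_add_cos_sq ((δ:ℂ)/2)
  have e1 : Real.sin (2*α) = 2*Real.sin α*Real.cos α := Real.sin_two_mul α
  have e2 : Real.sin (2*β) = 2*Real.sin β*Real.cos β := Real.sin_two_mul β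
  have e3 : Real.sin δ = 2*Real.sin (δ/2)*Real.cos (δ/2) := by
    rw [← Real.sin_two_mul]; congr 1; ring
  have e4 : Real.cos (2*δ) = 1 - 2*(2*Real.sin (δ/2)*Real.cos (δ/2))^2 := by
    rw [Real.cos_two_mul', ← e3]; linear_combination Real.sin_sq_add_cos_sq δ
  simp only [SL, redMom, redSpin, dm, rotated, bell, momPart, spinBell, Usel, Uplus, Uminus,
    Matrix.trace, Matrix.diag, Matrix.mul_apply, Fintype.sum_prod_type, Fin.sum_univ_two,
    Fin.isValue, Matrix.cons_val', Matrix.cons_val_zero, Matrix.cons_val_one, Matrix.head_cons,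
    Matrix.of_apply, Matrix.head_fin_const, Matrix.empty_val', Matrix.cons_val_fin_one,
    Prod.mk.injEq, if_true, if_false, one_ne_zero, zero_ne_one, and_true, and_false, true_and,
    false_and, and_self, ite_true, ite_false, reduceIte, map_add, _root_.map_mul, map_neg, map_sum,
    Complex.conj_ofReal, mul_zero, zero_mul, add_zero, zero_add, mul_one, one_mul, neg_neg,
    map_zero, e1, e2, e3, e4]
  push_cast
  linear_combination ((-2:ℂ)*Complex.sin (β:ℂ)^4*Complex.sin ((δ:ℂ)/2)^8 + (-8:ℂ)*Complex.sin (β:ℂ)^4*Complex.cos ((δ:ℂ)/2)^2*Complex.sin ((δ:ℂ)/2)^6 + (-12:ℂ)*Complex.sin (β:ℂ)^4*Complex.cos ((δ:ℂ)/2)^4*Complex.sin ((δ:ℂ)/2)^4 + (-8:ℂ)*Complex.sin (β:ℂ)^4*Complex.cos ((δ:ℂ)/2)^6*Complex.sin ((δ:ℂ)/2)^2 + (-2:ℂ)*Complex.sin (β:ℂ)^4*Complex.cos ((δ:ℂ)/2)^8 + (-4:ℂ)*Complex.cos (β:ℂ)^2*Complex.sin (β:ℂ)^2*Complex.sin ((δ:ℂ)/2)^8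 + (-16:ℂ)*Complex.cos (β:ℂ)^2*Complex.sin (β:ℂ)^2*Complex.cos ((δ:ℂ)/2)^2*Complex.sin ((δ:ℂ)/2)^6 + (-24:ℂ)*Complex.cos (β:ℂ)^2*Complex.sin (β:ℂ)^2*Complex.cos ((δ:ℂ)/2)^4*Complex.sin ((δ:ℂ)/2)^4 + (-16:ℂ)*Complex.cos (β:ℂ)^2*Complex.sin (β:ℂ)^2*Complex.cos ((δ:ℂ)/2)^6*Complex.sin ((δ:ℂ)/2)^2 + (-4:ℂ)*Complex.cos (β:ℂ)^2*Complex.sin (β:ℂ)^2*Complex.cos ((δ:ℂ)/2)^8 + (-2:ℂ)*Complex.cos (β:ℂ)^4*Complex.sin ((δ:ℂ)/2)^8 + (-8:ℂ)*Complex.cos (β:ℂ)^4*Complex.cos ((δ:ℂ)/2)^2*Complex.sin ((δ:ℂ)/2)^6 + (-12:ℂ)*Complex.cos (β:ℂ)^4*Complex.cos ((δ:ℂ)/2)^4*Complex.sin ((δ:ℂ)/2)^4 + (-8:ℂ)*Complex.cos (β:ℂ)^4*Complex.cos ((δ:ℂ)/2)^6*Complex.sin ((δ:ℂ)/2)^2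 + (-2:ℂ)*Complex.cos (β:ℂ)^4*Complex.cos ((δ:ℂ)/2)^8 + (-2:ℂ)*Complex.sin (α:ℂ)^2*Complex.sin (β:ℂ)^4*Complex.sin ((δ:ℂ)/2)^8 + (-8:ℂ)*Complex.sin (α:ℂ)^2*Complex.sin (β:ℂ)^4*Complex.cos ((δ:ℂ)/2)^2*Complex.sin ((δ:ℂ)/2)^6 + (-12:ℂ)*Complex.sin (α:ℂ)^2*Complex.sin (β:ℂ)^4*Complex.cos ((δ:ℂ)/2)^4*Complex.sin ((δ:ℂ)/2)^4 + (-8:ℂ)*Complex.sin (α:ℂ)^2*Complex.sin (β:ℂ)^4*Complex.cos ((δ:ℂ)/2)^6*Complex.sin ((δ:ℂ)/2)^2 + (-2:ℂ)*Complex.sin (α:ℂ)^2*Complex.sin (β:ℂ)^4*Complex.cos ((δ:ℂ)/2)^8 + (-4:ℂ)*Complex.sin (α:ℂ)^2*Complex.cos (β:ℂ)^2*Complex.sin (β:ℂ)^2*Complex.sin ((δ:ℂ)/2)^8 + (-16:ℂ)*Complex.sin (α:ℂ)^2*Complex.cos (β:ℂ)^2*Complex.sin (β:ℂ)^2*Complex.cos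 ((δ:ℂ)/2)^2*Complex.sin ((δ:ℂ)/2)^6 + (-24:ℂ)*Complex.sin (α:ℂ)^2*Complex.cos (β:ℂ)^2*Complex.sin (β:ℂ)^2*Complex.cos ((δ:ℂ)/2)^4*Complex.sin ((δ:ℂ)/2)^4 + (-16:ℂ)*Complex.sin (α:ℂ)^2*Complex.cos (β:ℂ)^2*Complex.sin (β:ℂ)^2*Complex.cos ((δ:ℂ)/2)^6*Complex.sin ((δ:ℂ)/2)^2 + (-4:ℂ)*Complex.sin (α:ℂ)^2*Complex.cos (β:ℂ)^2*Complex.sin (β:ℂ)^2*Complex.cos ((δ:ℂ)/2)^8 + (-2:ℂ)*Complex.sin (α:ℂ)^2*Complex.cos (β:ℂ)^4*Complex.sin ((δ:ℂ)/2)^8 + (-8:ℂ)*Complex.sin (α:ℂ)^2*Complex.cos (β:ℂ)^4*Complex.cos ((δ:ℂ)/2)^2*Complex.sin ((δ:ℂ)/2)^6 + (-12:ℂ)*Complex.sin (α:ℂ)^2*Complex.cos (β:ℂ)^4*Complex.cos ((δ:ℂ)/2)^4*Complex.sin ((δ:ℂ)/2)^4 + (-8:ℂ)*Complex.sin (α:ℂ)^2*Complex.cos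 (β:ℂ)^4*Complex.cos ((δ:ℂ)/2)^6*Complex.sin ((δ:ℂ)/2)^2 + (-2:ℂ)*Complex.sin (α:ℂ)^2*Complex.cos (β:ℂ)^4*Complex.cos ((δ:ℂ)/2)^8 + (-32:ℂ)*Complex.cos (α:ℂ)^2*Complex.cos ((δ:ℂ)/2)^2*Complex.sin ((δ:ℂ)/2)^2 + (64:ℂ)*Complex.cos (α:ℂ)^2*Complex.cos ((δ:ℂ)/2)^4*Complex.sin ((δ:ℂ)/2)^4 + (-2:ℂ)*Complex.cos (α:ℂ)^2*Complex.sin (β:ℂ)^4*Complex.sin ((δ:ℂ)/2)^8 + (24:ℂ)*Complex.cos (α:ℂ)^2*Complex.sin (β:ℂ)^4*Complex.cos ((δ:ℂ)/2)^2*Complex.sin ((δ:ℂ)/2)^6 + (-12:ℂ)*Complex.cos (α:ℂ)^2*Complex.sin (β:ℂ)^4*Complex.cos ((δ:ℂ)/2)^4*Complex.sin ((δ:ℂ)/2)^4 + (24:ℂ)*Complex.cos (α:ℂ)^2*Complex.sin (β:ℂ)^4*Complex.cos ((δ:ℂ)/2)^6*Complex.sin ((δ:ℂ)/2)^2 + (-2:ℂ)*Complex.cos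 (α:ℂ)^2*Complex.sin (β:ℂ)^4*Complex.cos ((δ:ℂ)/2)^8 + (64:ℂ)*Complex.cos (α:ℂ)^2*Complex.cos (β:ℂ)*Complex.sin (β:ℂ)*Complex.cos ((δ:ℂ)/2)^2*Complex.sin ((δ:ℂ)/2)^2 + (-256:ℂ)*Complex.cos (α:ℂ)^2*Complex.cos (β:ℂ)*Complex.sin (β:ℂ)*Complex.cos ((δ:ℂ)/2)^4*Complex.sin ((δ:ℂ)/2)^4 + (-64:ℂ)*Complex.cos (α:ℂ)^2*Complex.cos (β:ℂ)*Complex.sin (β:ℂ)^3*Complex.cos ((δ:ℂ)/2)^2*Complex.sin ((δ:ℂ)/2)^6 + (128:ℂ)*Complex.cos (α:ℂ)^2*Complex.cos (β:ℂ)*Complex.sin (β:ℂ)^3*Complex.cos ((δ:ℂ)/2)^4*Complex.sin ((δ:ℂ)/2)^4 + (-64:ℂ)*Complex.cos (α:ℂ)^2*Complex.cos (β:ℂ)*Complex.sin (β:ℂ)^3*Complex.cos ((δ:ℂ)/2)^6*Complex.sin ((δ:ℂ)/2)^2 + (-4:ℂ)*Complex.cos (α:ℂ)^2*Complex.cos (β:ℂ)^2*Complex.sin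 (β:ℂ)^2*Complex.sin ((δ:ℂ)/2)^8 + (48:ℂ)*Complex.cos (α:ℂ)^2*Complex.cos (β:ℂ)^2*Complex.sin (β:ℂ)^2*Complex.cos ((δ:ℂ)/2)^2*Complex.sin ((δ:ℂ)/2)^6 + (-24:ℂ)*Complex.cos (α:ℂ)^2*Complex.cos (β:ℂ)^2*Complex.sin (β:ℂ)^2*Complex.cos ((δ:ℂ)/2)^4*Complex.sin ((δ:ℂ)/2)^4 + (48:ℂ)*Complex.cos (α:ℂ)^2*Complex.cos (β:ℂ)^2*Complex.sin (β:ℂ)^2*Complex.cos ((δ:ℂ)/2)^6*Complex.sin ((δ:ℂ)/2)^2 + (-4:ℂ)*Complex.cos (α:ℂ)^2*Complex.cos (β:ℂ)^2*Complex.sin (β:ℂ)^2*Complex.cos ((δ:ℂ)/2)^8 + (-64:ℂ)*Complex.cos (α:ℂ)^2*Complex.cos (β:ℂ)^3*Complex.sin (β:ℂ)*Complex.cos ((δ:ℂ)/2)^2*Complex.sin ((δ:ℂ)/2)^6 + (128:ℂ)*Complex.cos (α:ℂ)^2*Complex.cos (β:ℂ)^3*Complex.sin (β:ℂ)*Complex.cos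 ((δ:ℂ)/2)^4*Complex.sin ((δ:ℂ)/2)^4 + (-64:ℂ)*Complex.cos (α:ℂ)^2*Complex.cos (β:ℂ)^3*Complex.sin (β:ℂ)*Complex.cos ((δ:ℂ)/2)^6*Complex.sin ((δ:ℂ)/2)^2 + (-2:ℂ)*Complex.cos (α:ℂ)^2*Complex.cos (β:ℂ)^4*Complex.sin ((δ:ℂ)/2)^8 + (24:ℂ)*Complex.cos (α:ℂ)^2*Complex.cos (β:ℂ)^4*Complex.cos ((δ:ℂ)/2)^2*Complex.sin ((δ:ℂ)/2)^6 + (-12:ℂ)*Complex.cos (α:ℂ)^2*Complex.cos (β:ℂ)^4*Complex.cos ((δ:ℂ)/2)^4*Complex.sin ((δ:ℂ)/2)^4 + (24:ℂ)*Complex.cos (α:ℂ)^2*Complex.cos (β:ℂ)^4*Complex.cos ((δ:ℂ)/2)^6*Complex.sin ((δ:ℂ)/2)^2 + (-2:ℂ)*Complex.cos (α:ℂ)^2*Complex.cos (β:ℂ)^4*Complex.cos ((δ:ℂ)/2)^8) * ha + ((-2:ℂ)*Complex.sin ((δ:ℂ)/2)^8 + (-8:ℂ)*Complex.cos ((δ:ℂ)/2)^2*Complex.sin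 ((δ:ℂ)/2)^6 + (-12:ℂ)*Complex.cos ((δ:ℂ)/2)^4*Complex.sin ((δ:ℂ)/2)^4 + (-8:ℂ)*Complex.cos ((δ:ℂ)/2)^6*Complex.sin ((δ:ℂ)/2)^2 + (-2:ℂ)*Complex.cos ((δ:ℂ)/2)^8 + (-2:ℂ)*Complex.sin (β:ℂ)^2*Complex.sin ((δ:ℂ)/2)^8 + (-8:ℂ)*Complex.sin (β:ℂ)^2*Complex.cos ((δ:ℂ)/2)^2*Complex.sin ((δ:ℂ)/2)^6 + (-12:ℂ)*Complex.sin (β:ℂ)^2*Complex.cos ((δ:ℂ)/2)^4*Complex.sin ((δ:ℂ)/2)^4 + (-8:ℂ)*Complex.sin (β:ℂ)^2*Complex.cos ((δ:ℂ)/2)^6*Complex.sin ((δ:ℂ)/2)^2 + (-2:ℂ)*Complex.sin (β:ℂ)^2*Complex.cos ((δ:ℂ)/2)^8 + (-2:ℂ)*Complex.cos (β:ℂ)^2*Complex.sin ((δ:ℂ)/2)^8 + (-8:ℂ)*Complex.cos (β:ℂ)^2*Complex.cos ((δ:ℂ)/2)^2*Complex.sin ((δ:ℂ)/2)^6 + (-12:ℂ)*Complex.cos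 (β:ℂ)^2*Complex.cos ((δ:ℂ)/2)^4*Complex.sin ((δ:ℂ)/2)^4 + (-8:ℂ)*Complex.cos (β:ℂ)^2*Complex.cos ((δ:ℂ)/2)^6*Complex.sin ((δ:ℂ)/2)^2 + (-2:ℂ)*Complex.cos (β:ℂ)^2*Complex.cos ((δ:ℂ)/2)^8 + (32:ℂ)*Complex.cos (α:ℂ)^2*Complex.cos ((δ:ℂ)/2)^2*Complex.sin ((δ:ℂ)/2)^6 + (32:ℂ)*Complex.cos (α:ℂ)^2*Complex.cos ((δ:ℂ)/2)^6*Complex.sin ((δ:ℂ)/2)^2 + (32:ℂ)*Complex.cos (α:ℂ)^2*Complex.sin (β:ℂ)^2*Complex.cos ((δ:ℂ)/2)^2*Complex.sin ((δ:ℂ)/2)^6 + (32:ℂ)*Complex.cos (α:ℂ)^2*Complex.sin (β:ℂ)^2*Complex.cos ((δ:ℂ)/2)^6*Complex.sin ((δ:ℂ)/2)^2 + (-64:ℂ)*Complex.cos (α:ℂ)^2*Complex.cos (β:ℂ)*Complex.sin (β:ℂ)*Complex.cos ((δ:ℂ)/2)^2*Complex.sin ((δ:ℂ)/2)^6 + (128:ℂ)*Complex.cos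 (α:ℂ)^2*Complex.cos (β:ℂ)*Complex.sin (β:ℂ)*Complex.cos ((δ:ℂ)/2)^4*Complex.sin ((δ:ℂ)/2)^4 + (-64:ℂ)*Complex.cos (α:ℂ)^2*Complex.cos (β:ℂ)*Complex.sin (β:ℂ)*Complex.cos ((δ:ℂ)/2)^6*Complex.sin ((δ:ℂ)/2)^2 + (32:ℂ)*Complex.cos (α:ℂ)^2*Complex.cos (β:ℂ)^2*Complex.cos ((δ:ℂ)/2)^2*Complex.sin ((δ:ℂ)/2)^6 + (32:ℂ)*Complex.cos (α:ℂ)^2*Complex.cos (β:ℂ)^2*Complex.cos ((δ:ℂ)/2)^6*Complex.sin ((δ:ℂ)/2)^2 + (-32:ℂ)*Complex.cos (α:ℂ)^4*Complex.cos ((δ:ℂ)/2)^2*Complex.sin ((δ:ℂ)/2)^6 + (-32:ℂ)*Complex.cos (α:ℂ)^4*Complex.cos ((δ:ℂ)/2)^6*Complex.sin ((δ:ℂ)/2)^2 + (-32:ℂ)*Complex.cos (α:ℂ)^4*Complex.sin (β:ℂ)^2*Complex.cos ((δ:ℂ)/2)^2*Complex.sin ((δ:ℂ)/2)^6 + (-32:ℂ)*Complex.cos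 (α:ℂ)^4*Complex.sin (β:ℂ)^2*Complex.cos ((δ:ℂ)/2)^6*Complex.sin ((δ:ℂ)/2)^2 + (64:ℂ)*Complex.cos (α:ℂ)^4*Complex.cos (β:ℂ)*Complex.sin (β:ℂ)*Complex.cos ((δ:ℂ)/2)^2*Complex.sin ((δ:ℂ)/2)^6 + (-128:ℂ)*Complex.cos (α:ℂ)^4*Complex.cos (β:ℂ)*Complex.sin (β:ℂ)*Complex.cos ((δ:ℂ)/2)^4*Complex.sin ((δ:ℂ)/2)^4 + (64:ℂ)*Complex.cos (α:ℂ)^4*Complex.cos (β:ℂ)*Complex.sin (β:ℂ)*Complex.cos ((δ:ℂ)/2)^6*Complex.sin ((δ:ℂ)/2)^2 + (-32:ℂ)*Complex.cos (α:ℂ)^4*Complex.cos (β:ℂ)^2*Complex.cos ((δ:ℂ)/2)^2*Complex.sin ((δ:ℂ)/2)^6 + (-32:ℂ)*Complex.cos (α:ℂ)^4*Complex.cos (β:ℂ)^2*Complex.cos ((δ:ℂ)/2)^6*Complex.sin ((δ:ℂ)/2)^2) * hb + ((-2:ℂ) + (-2:ℂ)*Complex.sin ((δ:ℂ)/2)^2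 + (-2:ℂ)*Complex.sin ((δ:ℂ)/2)^4 + (-2:ℂ)*Complex.sin ((δ:ℂ)/2)^6 + (-2:ℂ)*Complex.cos ((δ:ℂ)/2)^2 + (-4:ℂ)*Complex.cos ((δ:ℂ)/2)^2*Complex.sin ((δ:ℂ)/2)^2 + (-6:ℂ)*Complex.cos ((δ:ℂ)/2)^2*Complex.sin ((δ:ℂ)/2)^4 + (-2:ℂ)*Complex.cos ((δ:ℂ)/2)^4 + (-6:ℂ)*Complex.cos ((δ:ℂ)/2)^4*Complex.sin ((δ:ℂ)/2)^2 + (-2:ℂ)*Complex.cos ((δ:ℂ)/2)^6 + (32:ℂ)*Complex.cos (α:ℂ)^2*Complex.cos ((δ:ℂ)/2)^2*Complex.sin ((δ:ℂ)/2)^2 + (32:ℂ)*Complex.cos (α:ℂ)^2*Complex.cos ((δ:ℂ)/2)^2*Complex.sin ((δ:ℂ)/2)^4 + (32:ℂ)*Complex.cos (α:ℂ)^2*Complex.cos ((δ:ℂ)/2)^4*Complex.sin ((δ:ℂ)/2)^2 + (-64:ℂ)*Complex.cos (α:ℂ)^2*Complex.cos (β:ℂ)*Complex.sin (β:ℂ)*Complex.cos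 ((δ:ℂ)/2)^2*Complex.sin ((δ:ℂ)/2)^2 + (-64:ℂ)*Complex.cos (α:ℂ)^2*Complex.cos (β:ℂ)*Complex.sin (β:ℂ)*Complex.cos ((δ:ℂ)/2)^2*Complex.sin ((δ:ℂ)/2)^4 + (-64:ℂ)*Complex.cos (α:ℂ)^2*Complex.cos (β:ℂ)*Complex.sin (β:ℂ)*Complex.cos ((δ:ℂ)/2)^4*Complex.sin ((δ:ℂ)/2)^2 + (-32:ℂ)*Complex.cos (α:ℂ)^4*Complex.cos ((δ:ℂ)/2)^2*Complex.sin ((δ:ℂ)/2)^2 + (-32:ℂ)*Complex.cos (α:ℂ)^4*Complex.cos ((δ:ℂ)/2)^2*Complex.sin ((δ:ℂ)/2)^4 + (-32:ℂ)*Complex.cos (α:ℂ)^4*Complex.cos ((δ:ℂ)/2)^4*Complex.sin ((δ:ℂ)/2)^2 + (64:ℂ)*Complex.cos (α:ℂ)^4*Complex.cos (β:ℂ)*Complex.sin (β:ℂ)*Complex.cos ((δ:ℂ)/2)^2*Complex.sin ((δ:ℂ)/2)^2 + (64:ℂ)*Complex.cos (α:ℂ)^4*Complex.cos (β:ℂ)*Complex.sin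 (β:ℂ)*Complex.cos ((δ:ℂ)/2)^2*Complex.sin ((δ:ℂ)/2)^4 + (64:ℂ)*Complex.cos (α:ℂ)^4*Complex.cos (β:ℂ)*Complex.sin (β:ℂ)*Complex.cos ((δ:ℂ)/2)^4*Complex.sin ((δ:ℂ)/2)^2) * hd
end
end

section
/- CHSH inequality for local realistic theories: let μ be a probability measure on a measurable space Ω, and let A, A', B, B' : Ω → ℝ be measurable functions with |A(λ)| ≤ 1, |A'(λ)| ≤ 1, |B(λ)| ≤ 1, |B'(λ)| ≤ 1 for all λ. Then |∫ A·B dμ − ∫ A·B' dμ + ∫ A'·B' dμ + ∫ A'·B dμ| ≤ 2. -/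
open MeasureTheory

/-- The combination splits as `a (b - b') + a' (b + b')`, and
`|b - b'| + |b + b'| = 2 max |b| |b'|`. -/
theorem abs_chsh_le_two {α : Type*} [CommRing α] [LinearOrder α] [IsStrictOrderedRing α]
    {a a' b b' : α} (ha : |a| ≤ 1) (ha' : |a'| ≤ 1) (hb : |b| ≤ 1) (hb' : |b'| ≤ 1) :
    |a * b - a * b' + a' * b' + a' * b| ≤ 2 := by
  have hsum : |b - b'| + |b + b'| ≤ 2 := by
    obtain ⟨hb₁, hb₂⟩ := abs_le.mp hb
    obtain ⟨hb'₁, hb'₂⟩ := abs_le.mp hb'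
    rcases abs_cases (b - b') with ⟨h₁, _⟩ | ⟨h₁, _⟩ <;>
      rcases abs_cases (b + b') with ⟨h₂, _⟩ | ⟨h₂, _⟩ <;> linarith
  calc |a * b - a * b' + a' * b' + a' * b| = |a * (b - b') + a' * (b + b')| := by ring_nf
    _ ≤ |a| * |b - b'| + |a'| * |b + b'| := by
      simpa only [abs_mul] using abs_add_le (a * (b - b')) (a' * (b + b'))
    _ ≤ 1 * |b - b'| + 1 * |b + b'| := by gcongr
    _ ≤ 2 := by simpa only [one_mul] using hsum

theorem integrable_mul_of_abs_le_one {Ω : Type*} [MeasurableSpace Ω] {μ : Measure Ω}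
    [IsFiniteMeasure μ] {f g : Ω → ℝ} (hf : Measurable f) (hg : Measurable g)
    (hfb : ∀ l, |f l| ≤ 1) (hgb : ∀ l, |g l| ≤ 1) :
    Integrable (fun l => f l * g l) μ :=
  .of_bound (hf.mul hg).aestronglyMeasurable 1 <| ae_of_all _ fun l => by
    simpa only [Real.norm_eq_abs, abs_mul] using mul_le_one₀ (hfb l) (abs_nonneg _) (hgb l)

/-- CHSH inequality for local realistic theories: for a probability measure μ
and measurable observables A, A', B, B' bounded by 1 in absolute value,
`|E(a,b) − E(a,b') + E(a',b') + E(a',b)| ≤ 2`. -/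
theorem stmt6 {Ω : Type*} [MeasurableSpace Ω] (μ : Measure Ω) [IsProbabilityMeasure μ]
    (A A' B B' : Ω → ℝ)
    (hA : Measurable A) (hA' : Measurable A') (hB : Measurable B) (hB' : Measurable B')
    (hAb : ∀ l, |A l| ≤ 1) (hA'b : ∀ l, |A' l| ≤ 1)
    (hBb : ∀ l, |B l| ≤ 1) (hB'b : ∀ l, |B' l| ≤ 1) :
    |(∫ l, A l * B l ∂μ) - (∫ l, A l * B' l ∂μ) +
        (∫ l, A' l * B' l ∂μ) + (∫ l, A' l * B l ∂μ)| ≤ 2 := by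
  have hAB := integrable_mul_of_abs_le_one (μ := μ) hA hB hAb hBb
  have hAB' := integrable_mul_of_abs_le_one (μ := μ) hA hB' hAb hB'b
  have hA'B' := integrable_mul_of_abs_le_one (μ := μ) hA' hB' hA'b hB'b
  have hA'B := integrable_mul_of_abs_le_one (μ := μ) hA' hB hA'b hBb
  calc _ = ‖∫ l, (A l * B l - A l * B' l + A' l * B' l + A' l * B l) ∂μ‖ := by
        rw [Real.norm_eq_abs, integral_add ?_ hA'B, integral_add ?_ hA'B', integral_sub hAB hAB']
        exacts [hAB.sub hAB', (hAB.sub hAB').add hA'B']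
    _ ≤ 2 * μ.real Set.univ := norm_integral_le_of_norm_le_const <| ae_of_all _ fun l =>
        abs_chsh_le_two (hAb l) (hA'b l) (hBb l) (hB'b l)
    _ = 2 := by simp
end

section
/- Entropy of an ensemble with orthogonal supports: let ρ_i (i in a finite index set) be n×n density matrices whose supports are pairwise orthogonal, i.e. ρ_i·ρ_j = 0 for i ≠ j, and let p_i ≥ 0 with Σ p_i = 1. Then S(Σ_i p_i ρ_i) = −Σ_i p_i ln p_i + Σ_i p_i S(ρ_i), with the convention 0·ln 0 = 0. -/
/-!
Apart from zeros, the eigenvalues of `∑ pᵢ ρᵢ` are the numbers `pᵢ λᵢⱼ`, where `λᵢⱼ` are the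
eigenvalues of `ρᵢ`: orthogonality gives `(∑ pᵢ ρᵢ) ^ m = ∑ pᵢ ^ m ρᵢ ^ m` for `m ≥ 1`, so the
two families have the same power sums, and power sums determine a finite family up to zeros
(interpolate by a polynomial vanishing at `0`). The formula then follows from
`η (x y) = y η x + x η y` for `η x = -x log x`, together with `∑ⱼ λᵢⱼ = tr ρᵢ = 1`.
-/

open Matrix Kronecker
open scoped ComplexOrder

noncomputable section

/-- The von Neumann entropy `S(σ) = −Σ λᵢ ln λᵢ` of a Hermitian matrix, computed from its
eigenvalues (with the convention `0·ln 0 = 0`, automatic since `Real.log 0 = 0`);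
set to `0` on non-Hermitian matrices. -/
def vN {n : Type*} [Fintype n] [DecidableEq n] (σ : Matrix n n ℂ) : ℝ :=
  @dite _ σ.IsHermitian (Classical.dec _)
    (fun h => -∑ i, h.eigenvalues i * Real.log (h.eigenvalues i)) (fun _ => 0)

/-- A density matrix: Hermitian positive-semidefinite with trace 1. -/
def IsDensity {n : Type*} [Fintype n] (σ : Matrix n n ℂ) : Prop :=
  σ.PosSemidef ∧ σ.trace = 1

open Polynomial in
theorem Polynomial.sum_eval_eq_sum_coeff_mul_sum_pow {R α : Type*} [CommSemiring R]
    (s : Finset α) (a : α → R) (P : R[X]) :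
    ∑ x ∈ s, P.eval (a x) =
      ∑ m ∈ Finset.range (P.natDegree + 1), P.coeff m * ∑ x ∈ s, a x ^ m := by
  simp only [eval_eq_sum_range, Finset.mul_sum]
  exact Finset.sum_comm

theorem Fintype.sum_comp_eq_of_sum_pow_succ_eq {K α β : Type*} [Field K] [Fintype α] [Fintype β]
    {a : α → K} {b : β → K} (h : ∀ m : ℕ, ∑ x, a x ^ (m + 1) = ∑ y, b y ^ (m + 1))
    (f : K → K) (hf : f 0 = 0) : ∑ x, f (a x) = ∑ y, f (b y) := by
  classical
  set U := insert 0 (Finset.univ.image a ∪ Finset.univ.image b)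
  set P := Lagrange.interpolate U id f
  have hP : ∀ x ∈ U, P.eval x = f x := fun x hx =>
    Lagrange.eval_interpolate_at_node f (Set.injOn_id _) hx
  calc ∑ x, f (a x) = ∑ x, P.eval (a x) :=
        Finset.sum_congr rfl fun x _ => (hP _ (by simp [U])).symm
    _ = ∑ y, P.eval (b y) := by
        rw [Polynomial.sum_eval_eq_sum_coeff_mul_sum_pow,
          Polynomial.sum_eval_eq_sum_coeff_mul_sum_pow]
        refine Finset.sum_congr rfl fun m _ => ?_
        cases m with
        | zero =>
          rw [Polynomial.coeff_zero_eq_eval_zero, hP 0 (by simp [U]), hf, zero_mul, zero_mul]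
        | succ m => rw [h]
    _ = ∑ y, f (b y) := Finset.sum_congr rfl fun y _ => hP _ (by simp [U])

theorem Finset.sum_pow_succ_of_pairwise_mul_eq_zero {R ι : Type*} [Semiring R] (s : Finset ι)
    {a : ι → R} (ha : ∀ i ∈ s, ∀ j ∈ s, i ≠ j → a i * a j = 0) (m : ℕ) :
    (∑ i ∈ s, a i) ^ (m + 1) = ∑ i ∈ s, a i ^ (m + 1) := by
  induction m with
  | zero => simp
  | succ m ih =>
    rw [pow_succ, ih, Finset.sum_mul_sum]
    refine Finset.sum_congr rfl fun i hi => ?_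
    rw [Finset.sum_eq_single_of_mem i hi fun j hj hji => ?_, ← pow_succ]
    rw [pow_succ, mul_assoc, ha i hi j hj hji.symm, mul_zero]

namespace Matrix

variable {𝕜 n ι : Type*} [RCLike 𝕜] [Fintype ι]

theorem isHermitian_sum_ofReal_smul {ρ : ι → Matrix n n 𝕜} (hρ : ∀ i, (ρ i).IsHermitian)
    (p : ι → ℝ) : (∑ i, (p i : 𝕜) • ρ i).IsHermitian :=
  isSelfAdjoint_sum _ fun i _ => (hρ i).smul (RCLike.conj_ofReal (p i))

variable [Fintype n] [DecidableEq n]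

theorem IsHermitian.trace_pow {A : Matrix n n 𝕜} (hA : A.IsHermitian) (m : ℕ) :
    (A ^ m).trace = ∑ i, (hA.eigenvalues i : 𝕜) ^ m := by
  conv_lhs => rw [hA.spectral_theorem, ← map_pow, Unitary.conjStarAlgAut_apply,
    trace_mul_cycle, Unitary.coe_star_mul_self, one_mul, diagonal_pow, trace_diagonal]
  rfl

theorem IsHermitian.sum_eigenvalues_eq_one {A : Matrix n n 𝕜} (hA : A.IsHermitian)
    (htr : A.trace = 1) : ∑ i, hA.eigenvalues i = 1 := by
  have h := hA.trace_eq_sum_eigenvalues.symm.trans htr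
  rw [← RCLike.ofReal_sum] at h
  exact RCLike.ofReal_injective (h.trans RCLike.ofReal_one.symm)

theorem sum_comp_eigenvalues_sum_ofReal_smul {ρ : ι → Matrix n n 𝕜}
    (hρ : ∀ i, (ρ i).IsHermitian) (horth : ∀ i j, i ≠ j → ρ i * ρ j = 0) (p : ι → ℝ)
    (hA : (∑ i, (p i : 𝕜) • ρ i).IsHermitian) (f : ℝ → ℝ) (hf : f 0 = 0) :
    ∑ k, f (hA.eigenvalues k) = ∑ i, ∑ j, f (p i * (hρ i).eigenvalues j) := by
  rw [← Fintype.sum_prod_type' (f := fun i j => f (p i * (hρ i).eigenvalues j))]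
  refine Fintype.sum_comp_eq_of_sum_pow_succ_eq (fun m => ?_) f hf
  have hsmul_orth : ∀ i ∈ Finset.univ, ∀ j ∈ Finset.univ, i ≠ j →
      ((p i : 𝕜) • ρ i) * ((p j : 𝕜) • ρ j) = 0 := fun i _ j _ hij => by
    rw [smul_mul_smul_comm, horth i j hij, smul_zero]
  have htrace := hA.trace_pow (m + 1)
  rw [Finset.sum_pow_succ_of_pairwise_mul_eq_zero _ hsmul_orth, trace_sum] at htrace
  simp only [smul_pow, trace_smul, (hρ _).trace_pow, smul_eq_mul, Finset.mul_sum,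
    ← mul_pow] at htrace
  rw [Fintype.sum_prod_type]
  exact_mod_cast htrace.symm

end Matrix

theorem vN_eq_sum_negMulLog {n : Type*} [Fintype n] [DecidableEq n] {σ : Matrix n n ℂ}
    (hσ : σ.IsHermitian) : vN σ = ∑ i, Real.negMulLog (hσ.eigenvalues i) := by
  simp [vN, hσ, Real.negMulLog, Finset.sum_neg_distrib]

theorem stmt10_general (n k : ℕ) (ρ : Fin k → Matrix (Fin n) (Fin n) ℂ) (p : Fin k → ℝ)
    (hρ : ∀ i, IsDensity (ρ i))
    (horth : ∀ i j, i ≠ j → ρ i * ρ j = 0) :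
    vN (∑ i, (p i : ℂ) • ρ i) =
      -∑ i, p i * Real.log (p i) + ∑ i, p i * vN (ρ i) := by
  have hherm : ∀ i, (ρ i).IsHermitian := fun i => (hρ i).1.1
  have hA : (∑ i, (p i : ℂ) • ρ i).IsHermitian := isHermitian_sum_ofReal_smul hherm p
  have hspec : ∑ k, Real.negMulLog (hA.eigenvalues k) =
      ∑ i, ∑ j, Real.negMulLog (p i * (hherm i).eigenvalues j) :=
    sum_comp_eigenvalues_sum_ofReal_smul hherm horth p hA _ Real.negMulLog_zero
  have hblock : ∀ i, ∑ j, Real.negMulLog (p i * (hherm i).eigenvalues j) =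
      Real.negMulLog (p i) + p i * vN (ρ i) := fun i => by
    simp only [Real.negMulLog_mul, Finset.sum_add_distrib, ← Finset.sum_mul, ← Finset.mul_sum,
      (hherm i).sum_eigenvalues_eq_one (hρ i).2, one_mul, vN_eq_sum_negMulLog (hherm i)]
  rw [vN_eq_sum_negMulLog hA, hspec, Finset.sum_congr rfl fun i _ => hblock i,
    Finset.sum_add_distrib]
  simp only [Real.negMulLog, neg_mul, Finset.sum_neg_distrib]

/-- entropy of an ensemble of density matrices with pairwise orthogonal
supports: `S(Σᵢ pᵢ ρᵢ) = −Σᵢ pᵢ ln pᵢ + Σᵢ pᵢ S(ρᵢ)`. -/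
theorem stmt10 (n k : ℕ) (ρ : Fin k → Matrix (Fin n) (Fin n) ℂ) (p : Fin k → ℝ)
    (hρ : ∀ i, IsDensity (ρ i))
    (horth : ∀ i j, i ≠ j → ρ i * ρ j = 0)
    (hp : ∀ i, 0 ≤ p i) (hps : ∑ i, p i = 1) :
    vN (∑ i, (p i : ℂ) • ρ i) =
      -∑ i, p i * Real.log (p i) + ∑ i, p i * vN (ρ i) :=
  stmt10_general n k ρ p hρ horth
end
end

section
/- Every element of SL(2,ℂ) induces a proper orthochronous Lorentz transformation: for every 2×2 complex matrix A with det A = 1 there exists a real 4×4 matrix L with Lᵀ·η·L = η, det L = 1 and L₀₀ ≥ 1, such that for all x : Fin 4 → ℝ, A·X(x)·Aᴴ = X(L·x), where L·x denotes the matrix-vector product. -/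
/-!
`X` identifies `ℝ⁴` with the real space of Hermitian `2 × 2` matrices, and `det X(x) = xᵀ η x`.
Since `M ↦ A M Aᴴ` preserves Hermitian matrices, it is `X ∘ L ∘ X⁻¹` for a real `4 × 4` matrix
`L`, and `det (A X Aᴴ) = |det A|² det X` shows that `L` rescales the Minkowski form by `|det A|²`;
polarization gives `Lᵀ η L = |det A|² η`. The corner entry is `L₀₀ = ½ tr (A Aᴴ) = ½ ∑ |Aᵢⱼ|²`,
which is at least `|det A|`. For `det L`, complexify: since `vec (A M Aᴴ) = (Aᴴᵀ ⊗ A) vec M`, the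
complexification of `L` is conjugate to `Aᴴᵀ ⊗ A`, whose determinant is `|det A|⁴`.
-/

open Matrix

/-- The Minkowski metric matrix η = diag(1, −1, −1, −1). -/
def minkowski : Matrix (Fin 4) (Fin 4) ℝ := Matrix.diagonal ![1, -1, -1, -1]

/-- The Hermitian 2×2 matrix `X(x) = x₀·𝟙 − x₁·σ₁ − x₂·σ₂ − x₃·σ₃` associated to a
four-vector `x`. -/
def minkMat (x : Fin 4 → ℝ) : Matrix (Fin 2) (Fin 2) ℂ :=
  !![((x 0 : ℝ) : ℂ) - ((x 3 : ℝ) : ℂ), -((x 1 : ℝ) : ℂ) + Complex.I * ((x 2 : ℝ) : ℂ);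
     -((x 1 : ℝ) : ℂ) - Complex.I * ((x 2 : ℝ) : ℂ), ((x 0 : ℝ) : ℂ) + ((x 3 : ℝ) : ℂ)]

open scoped Kronecker

theorem Matrix.eq_of_dotProduct_mulVec_self_eq {n R : Type*} [Fintype n] [DecidableEq n]
    [CommRing R] [Invertible (2 : R)] {S T : Matrix n n R} (hS : S.IsSymm) (hT : T.IsSymm)
    (h : ∀ x, x ⬝ᵥ S *ᵥ x = x ⬝ᵥ T *ᵥ x) : S = T := by
  have polarization : ∀ M : Matrix n n R, M.IsSymm →
      QuadraticMap.associated M.toQuadraticForm' = Matrix.toLinearMap₂' R M := fun M hM =>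
    QuadraticMap.associated_left_inverse R fun x y => by
      simp only [toLinearMap₂'_apply']
      rw [dotProduct_mulVec, ← mulVec_transpose, hM.eq, dotProduct_comm]
  have hQ : S.toQuadraticForm' = T.toQuadraticForm' := QuadraticMap.ext fun (x : n → R) => by
    simp only [toQuadraticForm', LinearMap.BilinMap.toQuadraticMap_apply, toLinearMap₂'_apply', h]
  apply (Matrix.toLinearMap₂' R (S₁ := R) (S₂ := R)).injective
  rw [← polarization S hS, ← polarization T hT, hQ]

theorem Matrix.two_mul_norm_det_le_sum_norm_sq {R : Type*} [SeminormedCommRing R]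
    (A : Matrix (Fin 2) (Fin 2) R) : 2 * ‖A.det‖ ≤ ∑ i, ∑ j, ‖A i j‖ ^ 2 := by
  have h : ‖A.det‖ ≤ ‖A 0 0‖ * ‖A 1 1‖ + ‖A 0 1‖ * ‖A 1 0‖ := by
    rw [det_fin_two]
    exact (norm_sub_le _ _).trans (add_le_add (norm_mul_le _ _) (norm_mul_le _ _))
  simp only [Fin.sum_univ_two]
  nlinarith [sq_nonneg (‖A 0 0‖ - ‖A 1 1‖), sq_nonneg (‖A 0 1‖ - ‖A 1 0‖)]

theorem isSymm_minkowski : minkowski.IsSymm := isSymm_diagonal _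

@[simps]
def minkMatLinear : (Fin 4 → ℝ) →ₗ[ℝ] Matrix (Fin 2) (Fin 2) ℂ where
  toFun := minkMat
  map_add' x y := by
    ext i j; fin_cases i <;> fin_cases j <;> simp [minkMat] <;> ring
  map_smul' c x := by
    ext i j; fin_cases i <;> fin_cases j <;> simp [minkMat] <;> ring

theorem isHermitian_minkMat (x : Fin 4 → ℝ) : (minkMat x).IsHermitian := by
  ext i j; fin_cases i <;> fin_cases j <;> simp [minkMat, sub_eq_add_neg]

theorem det_minkMat (x : Fin 4 → ℝ) : (minkMat x).det = ((x ⬝ᵥ minkowski *ᵥ x : ℝ) : ℂ) := by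
  simp only [minkMat, Fin.isValue, det_fin_two, of_apply, cons_val', cons_val_zero,
    cons_val_fin_one, cons_val_one, dotProduct, minkowski, mulVec_diagonal, Fin.sum_univ_four,
    one_mul, neg_mul, mul_neg, cons_val, Complex.ofReal_add, Complex.ofReal_mul, Complex.ofReal_neg]
  linear_combination (x 2 : ℂ) ^ 2 * Complex.I_sq

noncomputable def minkCoords (M : Matrix (Fin 2) (Fin 2) ℂ) : Fin 4 → ℝ :=
  ![(M 0 0 + M 1 1).re / 2, -(M 1 0).re, -(M 1 0).im, (M 1 1 - M 0 0).re / 2]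

theorem minkMat_minkCoords {M : Matrix (Fin 2) (Fin 2) ℂ} (hM : M.IsHermitian) :
    minkMat (minkCoords M) = M := by
  have h00 : (M 0 0).im = 0 := Complex.conj_eq_iff_im.mp (hM.apply 0 0)
  have h11 : (M 1 1).im = 0 := Complex.conj_eq_iff_im.mp (hM.apply 1 1)
  have h10 : star (M 0 1) = M 1 0 := hM.apply 1 0
  ext i j; fin_cases i <;> fin_cases j <;> apply Complex.ext <;>
    simp [minkMat, minkCoords, ← h10, h00, h11] <;> ring

noncomputable def lorentzOf (A : Matrix (Fin 2) (Fin 2) ℂ) : Matrix (Fin 4) (Fin 4) ℝ :=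
  Matrix.of fun μ ν => minkCoords (A * minkMat (Pi.single ν 1) * Aᴴ) μ

theorem mul_minkMat_mul_conjTranspose (A : Matrix (Fin 2) (Fin 2) ℂ) (x : Fin 4 → ℝ) :
    A * minkMat x * Aᴴ = minkMat (lorentzOf A *ᵥ x) := by
  have key : (LinearMap.mulLeft ℝ A ∘ₗ LinearMap.mulRight ℝ Aᴴ) ∘ₗ minkMatLinear =
      minkMatLinear ∘ₗ Matrix.toLin' (lorentzOf A) := by
    refine (Pi.basisFun ℝ (Fin 4)).ext fun ν => ?_
    have hν : lorentzOf A *ᵥ Pi.single ν 1 = minkCoords (A * minkMat (Pi.single ν 1) * Aᴴ) := by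
      rw [mulVec_single_one]; rfl
    simp only [LinearMap.comp_apply, Pi.basisFun_apply, toLin'_apply, hν, minkMatLinear_apply,
      LinearMap.mulLeft_apply, LinearMap.mulRight_apply, ← mul_assoc]
    exact (minkMat_minkCoords (isHermitian_mul_mul_conjTranspose A (isHermitian_minkMat _))).symm
  simpa only [LinearMap.comp_apply, toLin'_apply, minkMatLinear_apply, LinearMap.mulLeft_apply,
    LinearMap.mulRight_apply, ← mul_assoc] using LinearMap.congr_fun key x

theorem minkowski_form_lorentzOf_mulVec (A : Matrix (Fin 2) (Fin 2) ℂ) (x : Fin 4 → ℝ) :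
    lorentzOf A *ᵥ x ⬝ᵥ minkowski *ᵥ (lorentzOf A *ᵥ x) =
      Complex.normSq A.det * (x ⬝ᵥ minkowski *ᵥ x) := by
  apply Complex.ofReal_injective
  rw [← det_minkMat, ← mul_minkMat_mul_conjTranspose, det_mul, det_mul, det_conjTranspose,
    det_minkMat, Complex.ofReal_mul, Complex.normSq_eq_conj_mul_self, ← Complex.star_def]
  ring

theorem transpose_mul_minkowski_mul_lorentzOf (A : Matrix (Fin 2) (Fin 2) ℂ) :
    (lorentzOf A)ᵀ * minkowski * lorentzOf A = Complex.normSq A.det • minkowski := by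
  refine eq_of_dotProduct_mulVec_self_eq ?_ (isSymm_minkowski.smul _) fun x => ?_
  · simp only [IsSymm, transpose_mul, transpose_transpose, isSymm_minkowski.eq, Matrix.mul_assoc]
  · rw [smul_mulVec, dotProduct_smul, smul_eq_mul, ← minkowski_form_lorentzOf_mulVec,
      ← mulVec_mulVec, ← mulVec_mulVec, dotProduct_mulVec, vecMul_transpose]

theorem lorentzOf_zero_zero (A : Matrix (Fin 2) (Fin 2) ℂ) :
    lorentzOf A 0 0 = (∑ i, ∑ j, ‖A i j‖ ^ 2) / 2 := by
  have he : minkMat (Pi.single 0 1) = 1 := by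
    ext i j; fin_cases i <;> fin_cases j <;> simp [minkMat]
  simp [lorentzOf, minkCoords, he, mul_apply, Fin.sum_univ_two, Complex.sq_norm,
    Complex.normSq_apply]

theorem norm_det_le_lorentzOf_zero_zero (A : Matrix (Fin 2) (Fin 2) ℂ) :
    ‖A.det‖ ≤ lorentzOf A 0 0 := by
  rw [lorentzOf_zero_zero]
  linarith [two_mul_norm_det_le_sum_norm_sq A]

def minkVecMatrix : Matrix (Fin 2 × Fin 2) (Fin 4) ℂ :=
  Matrix.of fun p ν => vec (minkMat (Pi.single ν 1)) p

theorem minkVecMatrix_mulVec (x : Fin 4 → ℝ) :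
    minkVecMatrix *ᵥ (fun μ => (x μ : ℂ)) = vec (minkMat x) := by
  ext ⟨i, j⟩
  fin_cases i <;> fin_cases j <;>
    simp [minkVecMatrix, minkMat, mulVec, dotProduct, Fin.sum_univ_four] <;> ring

theorem minkVecMatrix_mul_map_lorentzOf (A : Matrix (Fin 2) (Fin 2) ℂ) :
    minkVecMatrix * Complex.ofRealHom.mapMatrix (lorentzOf A) = (Aᴴᵀ ⊗ₖ A) * minkVecMatrix := by
  refine ext_of_mulVec_single fun ν => ?_
  have hν : (Pi.single ν 1 : Fin 4 → ℂ) = fun μ => ((Pi.single ν 1 : Fin 4 → ℝ) μ : ℂ) := by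
    funext μ; simp [Pi.single_apply, apply_ite]
  calc (minkVecMatrix * Complex.ofRealHom.mapMatrix (lorentzOf A)) *ᵥ Pi.single ν 1
      = minkVecMatrix *ᵥ fun μ => ((lorentzOf A *ᵥ Pi.single ν 1) μ : ℂ) := by
        rw [← mulVec_mulVec, mulVec_single_one, mulVec_single_one]; rfl
    _ = vec (A * minkMat (Pi.single ν 1) * Aᴴ) := by
        rw [minkVecMatrix_mulVec, mul_minkMat_mul_conjTranspose]
    _ = ((Aᴴᵀ ⊗ₖ A) * minkVecMatrix) *ᵥ Pi.single ν 1 := by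
        rw [← mulVec_mulVec, hν, minkVecMatrix_mulVec, kronecker_mulVec_vec, transpose_transpose]

theorem minkVecMatrix_submatrix :
    minkVecMatrix.submatrix finProdFinEquiv.symm id =
      !![1, 0, 0, -1; 0, -1, -Complex.I, 0; 0, -1, Complex.I, 0; 1, 0, 0, 1] := by
  ext i j
  fin_cases i <;> fin_cases j <;> simp [minkVecMatrix, minkMat] <;> rfl

theorem det_minkVecMatrix_submatrix :
    (minkVecMatrix.submatrix finProdFinEquiv.symm id).det = -4 * Complex.I := by
  -- `simp` leaves this instance of `Fin.succAbove` unevaluated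
  have h32 : (Fin.succAbove 3 2 : Fin 4) = 2 := rfl
  rw [minkVecMatrix_submatrix]
  simp [det_succ_row_zero, Fin.sum_univ_succ, h32]
  ring

theorem det_lorentzOf (A : Matrix (Fin 2) (Fin 2) ℂ) :
    (lorentzOf A).det = Complex.normSq A.det ^ 2 := by
  set e : Fin 4 ≃ Fin 2 × Fin 2 := (finProdFinEquiv (m := 2) (n := 2)).symm
  have h := congrArg (fun M => (M.submatrix e id).det) (minkVecMatrix_mul_map_lorentzOf A)
  rw [← submatrix_mul_equiv _ _ _ (Equiv.refl _), ← submatrix_mul_equiv _ _ _ e, det_mul, det_mul,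
    Equiv.coe_refl, submatrix_id_id, det_submatrix_equiv_self, det_kronecker, det_transpose,
    det_conjTranspose, ← RingHom.map_det, det_minkVecMatrix_submatrix, Fintype.card_fin,
    mul_comm _ (-4 * Complex.I), Complex.ofRealHom_eq_coe] at h
  apply Complex.ofReal_injective
  rw [Complex.ofReal_pow, Complex.normSq_eq_conj_mul_self, mul_pow, ← Complex.star_def]
  exact mul_left_cancel₀ (by simp) h

/-- every `A ∈ SL(2,ℂ)` induces a proper orthochronous Lorentz transformation
`L`, i.e. `Lᵀ·η·L = η`, `det L = 1`, `L₀₀ ≥ 1`, with `A·X(x)·Aᴴ = X(L·x)` for all `x`. -/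
theorem stmt18 (A : Matrix (Fin 2) (Fin 2) ℂ) (hA : A.det = 1) :
    ∃ L : Matrix (Fin 4) (Fin 4) ℝ,
      Lᵀ * minkowski * L = minkowski ∧
      L.det = 1 ∧
      1 ≤ L 0 0 ∧
      ∀ x : Fin 4 → ℝ, A * minkMat x * Aᴴ = minkMat (L.mulVec x) := by
  refine ⟨lorentzOf A, ?_, ?_, ?_, mul_minkMat_mul_conjTranspose A⟩
  · simpa [hA] using transpose_mul_minkowski_mul_lorentzOf A
  · simpa [hA] using det_lorentzOf A
  · simpa [hA] using norm_det_le_lorentzOf_zero_zero A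
end
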